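/- For every ε ∈ (0, 2) there exists a constant C_ε > 0 such that for every v ∈ Λ*₊ one has Σ_{r ∈ Λ*₊, r ≠ −v} 1 / (|r|³ |r + v|²) ≤ C_ε · |v|^{−2+ε}. -/

import Mathlib

open scoped RealInnerProductSpace
open Real MeasureTheory

/-- The momentum lattice point `2πk ∈ Λ* = 2πℤ³`, viewed as an element of `ℝ³`. -/
noncomputable def lat (k : Fin 3 → ℤ) : EuclideanSpace ℝ (Fin 3) :=
  WithLp.toLp 2 (fun i => 2 * Real.pi * (k i))

/-! With `m = min(|r|, |r + v|)` and `M = max(|r|, |r + v|)` one has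
`|r|³ |r + v|² ≥ M^(2-ε) m^(3+ε)` and `|v| ≤ 2M`, so each summand is at most
`4 |v|^(ε-2) m^(-(3+ε)) ≤ 4 |v|^(ε-2) (|r|^(-(3+ε)) + |r + v|^(-(3+ε)))`.
Since `3 + ε > 3`, the lattice sum of `|r|^(-(3+ε))` converges, and shifting it by `v`
does not change it. -/

theorem Module.Basis.summable_norm_sum_int_smul_rpow_neg {E ι : Type*} [NormedAddCommGroup E]
    [NormedSpace ℝ E] [Fintype ι] (b : Module.Basis ι ℝ E) {p : ℝ} (hp : Fintype.card ι < p) :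
    Summable fun k : ι → ℤ => ‖∑ i, (k i : ℝ) • b i‖ ^ (-p) := by
  have : FiniteDimensional ℝ E := b.finiteDimensional_of_finite
  set bℤ := b.restrictScalars ℤ
  have hrank : Module.finrank ℤ (Submodule.span ℤ (Set.range b)) = Fintype.card ι :=
    Module.finrank_eq_card_basis bℤ
  have hL := ZLattice.summable_norm_rpow (Submodule.span ℤ (Set.range b)) (-p)
    (by rw [hrank]; linarith)
  refine (hL.comp_injective bℤ.equivFun.symm.injective).congr fun k => ?_
  simp [bℤ, Module.Basis.equivFun_symm_apply, Int.cast_smul_eq_zsmul]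

theorem Real.rpow_sub_mul_rpow_add_le {m M : ℝ} (s u t : ℝ) (hm : 0 < m) (hmM : m ≤ M)
    (ht : 0 ≤ t) : M ^ (s - t) * m ^ (u + t) ≤ M ^ s * m ^ u := by
  have hM : 0 < M := hm.trans_le hmM
  rw [Real.rpow_sub hM, Real.rpow_add hm, div_mul_eq_mul_div, div_le_iff₀ (by positivity)]
  have : m ^ t ≤ M ^ t := Real.rpow_le_rpow hm.le hmM ht
  calc M ^ s * (m ^ u * m ^ t) = M ^ s * m ^ u * m ^ t := by ring
    _ ≤ M ^ s * m ^ u * M ^ t := by gcongr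

theorem max_rpow_mul_min_rpow_le {a b ε : ℝ} (ha : 0 < a) (hb : 0 < b) (hε : 0 ≤ ε) :
    max a b ^ (2 - ε) * min a b ^ (3 + ε) ≤ a ^ (3 : ℝ) * b ^ (2 : ℝ) := by
  rcases le_total a b with hab | hba
  · rw [max_eq_right hab, min_eq_left hab, mul_comm (a ^ _)]
    exact Real.rpow_sub_mul_rpow_add_le 2 3 ε ha hab hε
  · rw [max_eq_left hba, min_eq_right hba]
    convert Real.rpow_sub_mul_rpow_add_le 3 2 (1 + ε) hb hba (by linarith) using 3 <;> ring

theorem one_div_pow_three_mul_pow_two_le {a b c ε : ℝ} (ha : 0 < a) (hb : 0 < b) (hc : 0 < c)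
    (hcab : c ≤ a + b) (hε0 : 0 ≤ ε) (hε2 : ε ≤ 2) :
    1 / (a ^ 3 * b ^ 2) ≤ 4 * c ^ (ε - 2) * (a ^ (-(3 + ε)) + b ^ (-(3 + ε))) := by
  have hm : 0 < min a b := lt_min ha hb
  have hM : c / 2 ≤ max a b := by linarith [le_max_left a b, le_max_right a b]
  have hmin : min a b ^ (-(3 + ε)) ≤ a ^ (-(3 + ε)) + b ^ (-(3 + ε)) := by
    rcases min_choice a b with h | h <;> rw [h] <;> simp [Real.rpow_nonneg, ha.le, hb.le]
  have htwo : (2 : ℝ) ^ (2 - ε) ≤ 4 := by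
    calc (2 : ℝ) ^ (2 - ε) ≤ 2 ^ (2 : ℝ) :=
          Real.rpow_le_rpow_of_exponent_le one_le_two (by linarith)
      _ = 4 := by norm_num
  calc 1 / (a ^ 3 * b ^ 2)
      ≤ 1 / (max a b ^ (2 - ε) * min a b ^ (3 + ε)) := by
        refine one_div_le_one_div_of_le (by positivity) ?_
        exact_mod_cast max_rpow_mul_min_rpow_le ha hb hε0
    _ = max a b ^ (ε - 2) * min a b ^ (-(3 + ε)) := by
        rw [one_div, mul_inv, ← Real.rpow_neg (hm.le.trans min_le_max), neg_sub,
          ← Real.rpow_neg hm.le]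
    _ ≤ (c / 2) ^ (ε - 2) * min a b ^ (-(3 + ε)) := by
        gcongr ?_ * _
        exact Real.rpow_le_rpow_of_nonpos (by positivity) hM (by linarith)
    _ = 2 ^ (2 - ε) * c ^ (ε - 2) * min a b ^ (-(3 + ε)) := by
        rw [Real.div_rpow hc.le zero_le_two, div_eq_mul_inv, ← Real.rpow_neg zero_le_two, neg_sub]
        ring
    _ ≤ 4 * c ^ (ε - 2) * (a ^ (-(3 + ε)) + b ^ (-(3 + ε))) := by gcongr

theorem lat_eq_smul_sum (r : Fin 3 → ℤ) :
    lat r = (2 * π) • ∑ i, (r i : ℝ) • EuclideanSpace.basisFun (Fin 3) ℝ i := by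
  ext i
  simp [lat, Pi.single_apply]

theorem lat_add (r v : Fin 3 → ℤ) : lat (r + v) = lat r + lat v := by
  ext i
  simp [lat, mul_add]

theorem norm_lat_pos {r : Fin 3 → ℤ} (hr : r ≠ 0) : 0 < ‖lat r‖ := by
  obtain ⟨i, hi⟩ := Function.ne_iff.mp hr
  refine norm_pos_iff.mpr fun h => hi ?_
  simpa [lat, pi_ne_zero] using congrArg (· i) h

theorem summable_norm_lat_rpow_neg {p : ℝ} (hp : 3 < p) :
    Summable fun r => ‖lat r‖ ^ (-p) := by
  have hb := (EuclideanSpace.basisFun (Fin 3) ℝ).toBasis.summable_norm_sum_int_smul_rpow_neg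
    (p := p) (by simpa using hp)
  refine (hb.mul_left ((2 * π) ^ (-p))).congr fun r => ?_
  rw [lat_eq_smul_sum, norm_smul, Real.norm_of_nonneg (by positivity),
    ← Real.mul_rpow (by positivity) (by positivity)]
  simp

theorem convolution_summand_le {ε : ℝ} (hε0 : 0 ≤ ε) (hε2 : ε ≤ 2) {v : Fin 3 → ℤ}
    (hv : v ≠ 0) (r : Fin 3 → ℤ) :
    (if r ≠ 0 ∧ r ≠ -v then 1 / (‖lat r‖ ^ 3 * ‖lat (r + v)‖ ^ 2) else 0) ≤
      4 * ‖lat v‖ ^ (ε - 2) * (‖lat r‖ ^ (-(3 + ε)) + ‖lat (r + v)‖ ^ (-(3 + ε))) := by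
  split_ifs with h
  · obtain ⟨hr, hrv⟩ := h
    have hrv' : r + v ≠ 0 := fun h => hrv (eq_neg_of_add_eq_zero_left h)
    refine one_div_pow_three_mul_pow_two_le (norm_lat_pos hr) (norm_lat_pos hrv')
      (norm_lat_pos hv) ?_ hε0 hε2
    calc ‖lat v‖ = ‖lat (r + v) - lat r‖ := by rw [lat_add, add_sub_cancel_left]
      _ ≤ ‖lat r‖ + ‖lat (r + v)‖ := (norm_sub_le _ _).trans_eq (add_comm _ _)
  · positivity

/-- For every `ε ∈ (0, 2)` there exists `C_ε > 0` such that for every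
`v ∈ Λ*₊`, `Σ_{r ∈ Λ*₊, r ≠ −v} 1/(|r|³|r+v|²) ≤ C_ε · |v|^{−2+ε}`. -/
theorem lattice_convolution_cubic_bound (ε : ℝ) (hε0 : 0 < ε) (hε2 : ε < 2) :
    ∃ C > 0, ∀ v : Fin 3 → ℤ, v ≠ 0 →
      (∑' r : Fin 3 → ℤ,
          if r ≠ 0 ∧ r ≠ -v then 1 / (‖lat r‖ ^ 3 * ‖lat (r + v)‖ ^ 2) else 0)
        ≤ C * ‖lat v‖ ^ (-2 + ε) := by
  have hsum : Summable fun r => ‖lat r‖ ^ (-(3 + ε)) := summable_norm_lat_rpow_neg (by linarith)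
  set Z := ∑' r, ‖lat r‖ ^ (-(3 + ε))
  refine ⟨8 * Z + 1, by positivity, fun v hv => ?_⟩
  have hshift : Summable fun r => ‖lat (r + v)‖ ^ (-(3 + ε)) :=
    (Equiv.addRight v).summable_iff.mpr hsum
  have hZ : ∑' r, ‖lat (r + v)‖ ^ (-(3 + ε)) = Z :=
    (Equiv.addRight v).tsum_eq fun r => ‖lat r‖ ^ (-(3 + ε))
  have hle := convolution_summand_le hε0.le hε2.le hv
  have hbound := (hsum.add hshift).mul_left (4 * ‖lat v‖ ^ (ε - 2))
  calc _ ≤ ∑' r, 4 * ‖lat v‖ ^ (ε - 2) * (‖lat r‖ ^ (-(3 + ε)) + ‖lat (r + v)‖ ^ (-(3 + ε))) :=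
        (hbound.of_nonneg_of_le (fun r => by positivity) hle).tsum_le_tsum hle hbound
    _ = 8 * Z * ‖lat v‖ ^ (-2 + ε) := by
        rw [tsum_mul_left, hsum.tsum_add hshift, hZ, neg_add_eq_sub]
        ring
    _ ≤ (8 * Z + 1) * ‖lat v‖ ^ (-2 + ε) := by gcongr; linarith
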